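/- arXiv:2212.01500 — 4 statements merged into one kernel-verified Lean document; each statement's English description precedes it below -/
import Mathlib

section
/- If a ∈ [0, 1] and b, c ∈ [−1, 0], then (1 − a)(1 − ab)(1 − ac)(1 − abc) ≤ 1. -/
theorem pohst_lemma_four (a b c : ℝ) (ha : a ∈ Set.Icc (0 : ℝ) 1)
    (hb : b ∈ Set.Icc (-1 : ℝ) 0) (hc : c ∈ Set.Icc (-1 : ℝ) 0) :
    (1 - a) * (1 - a * b) * (1 - a * c) * (1 - a * b * c) ≤ 1 := by
  obtain ⟨ha0, ha1⟩ := ha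
  obtain ⟨hb0, hb1⟩ := hb
  obtain ⟨hc0, hc1⟩ := hc
  have hA : (0:ℝ) ≤ 1 - a := by linarith
  have hC : (0:ℝ) ≤ 1 - a * c := by nlinarith
  have h1 : (1 - a * b) * (1 - a * b * c) ≤ 1 + a * (-b) * (1 + c) := by
    nlinarith [mul_nonneg (mul_nonneg (sq_nonneg a) (sq_nonneg b)) (neg_nonneg.2 hc1)]
  have hs : (-b) * (1 + c) + (-c) ≤ 1 := by nlinarith [mul_nonneg (by linarith : (0:ℝ) ≤ 1 + b) (by linarith : (0:ℝ) ≤ 1 + c)]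
  have hsn : (0:ℝ) ≤ (-b) * (1 + c) + (-c) := by
    have := mul_nonneg (neg_nonneg.2 hb1) (by linarith : (0:ℝ) ≤ 1 + c)
    linarith
  have ht : ((-b) * (1 + c)) * (-c) ≤ 1 / 4 := by
    nlinarith [sq_nonneg ((-b) * (1 + c) - (-c))]
  have h2 : (1 + a * (-b) * (1 + c)) * (1 - a * c) ≤ 1 + a + a ^ 2 / 4 := by
    nlinarith [mul_nonneg ha0 (sub_nonneg.2 hs), mul_nonneg (sq_nonneg a) (sub_nonneg.2 ht)]
  have hBD : (0:ℝ) ≤ (1 - a * b) * (1 - a * b * c) := by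
    have hB : (0:ℝ) ≤ 1 - a * b := by nlinarith
    have hD : (0:ℝ) ≤ 1 - a * b * c := by nlinarith [mul_nonneg (neg_nonneg.2 hb1) (neg_nonneg.2 hc1)]
    exact mul_nonneg hB hD
  calc (1 - a) * (1 - a * b) * (1 - a * c) * (1 - a * b * c)
      = (1 - a) * (((1 - a * b) * (1 - a * b * c)) * (1 - a * c)) := by ring
    _ ≤ (1 - a) * ((1 + a * (-b) * (1 + c)) * (1 - a * c)) := by
        apply mul_le_mul_of_nonneg_left _ hA
        exact mul_le_mul_of_nonneg_right h1 hC
    _ ≤ (1 - a) * (1 + a + a ^ 2 / 4) := mul_le_mul_of_nonneg_left h2 hA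
    _ ≤ 1 := by nlinarith
end

section
/- Let v = (x_1, …, x_n) ∈ ([−1,1]∖{0})^n with n odd and with the number of indices i such that sign(x_i) = −1 odd. Then b_1(v) + 1 = b_{−1}(v), where for l ∈ {+1, −1}, b_l(v) is the number of canonical pairs (i,j) ∈ K_v with s(i,j) = l and with i = 1 or j = n. -/
open Finset

/-- The product sign `s(i,j) = ∏_{k=i}^{j} sign(x_k)`. -/
noncomputable def psign (x : ℕ → ℝ) (i j : ℕ) : ℝ :=
  ∏ k ∈ Finset.Icc i j, Real.sign (x k)

open Classical in
/-- The set `K_v` of canonical index pairs: `s(i,j) = (-1)^(i+j+1)`. -/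
noncomputable def Kv (n : ℕ) (x : ℕ → ℝ) : Finset (ℕ × ℕ) :=
  (Finset.Icc 1 n ×ˢ Finset.Icc 1 n).filter
    (fun q => q.1 ≤ q.2 ∧ psign x q.1 q.2 = (-1 : ℝ) ^ (q.1 + q.2 + 1))

open Classical in
/-- `b_l(v)` : the number of canonical pairs `(i,j)` with `s(i,j) = l` and
`i = 1` or `j = n`. -/
noncomputable def bcount (n : ℕ) (x : ℕ → ℝ) (l : ℝ) : ℕ :=
  ((Kv n x).filter (fun q => psign x q.1 q.2 = l ∧ (q.1 = 1 ∨ q.2 = n))).card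

/-!
Since `s(1,j) * s(j+1,n) = s(1,n) = -1` and every `s` is `±1`, we get `s(j+1,n) = -s(1,j)`;
as `n` is odd, `(1,j)` is canonical exactly when `(j+1,n)` is. Hence `(1,j) ↔ (j+1,n)`,
`1 ≤ j < n`, matches the boundary canonical pairs of sign `1` with those of sign `-1` other
than `(1,n)`, which is itself canonical of sign `-1`.
-/

lemma psign_mul_psign (x : ℕ → ℝ) {i j k : ℕ} (hij : i ≤ j + 1) (hjk : j ≤ k) :
    psign x i j * psign x (j + 1) k = psign x i k := by
  simp only [psign, ← Finset.Ico_add_one_right_eq_Icc]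
  exact prod_Ico_consecutive _ hij (by omega)

lemma psign_eq_neg_one_pow_card {x : ℕ → ℝ} {i j : ℕ} (hx : ∀ k ∈ Icc i j, x k ≠ 0) :
    psign x i j = (-1) ^ #{k ∈ Icc i j | Real.sign (x k) = -1} := by
  rw [psign, ← prod_filter_mul_prod_filter_not (Icc i j) (fun k => Real.sign (x k) = -1),
    prod_congr rfl fun k hk => (mem_filter.mp hk).2, prod_const, prod_eq_one, mul_one]
  intro k hk
  obtain ⟨hk, hsign⟩ := mem_filter.mp hk
  exact (Real.sign_apply_eq_of_ne_zero _ (hx k hk)).resolve_left hsign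

lemma psign_sq {x : ℕ → ℝ} {i j : ℕ} (hx : ∀ k ∈ Icc i j, x k ≠ 0) : psign x i j ^ 2 = 1 := by
  rw [psign_eq_neg_one_pow_card hx, ← pow_mul, pow_mul', neg_one_sq, one_pow]

lemma psign_add_one_left {x : ℕ → ℝ} {i j k : ℕ} (hx : ∀ m ∈ Icc i j, x m ≠ 0)
    (hij : i ≤ j + 1) (hjk : j ≤ k) : psign x (j + 1) k = psign x i k * psign x i j := by
  linear_combination psign x i j * psign_mul_psign x hij hjk - psign x (j + 1) k * psign_sq hx

open Classical in
noncomputable def boundaryPairs (n : ℕ) (x : ℕ → ℝ) (l : ℝ) : Finset (ℕ × ℕ) :=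
  (Kv n x).filter (fun q => psign x q.1 q.2 = l ∧ (q.1 = 1 ∨ q.2 = n))

lemma bcount_eq_card (n : ℕ) (x : ℕ → ℝ) (l : ℝ) : bcount n x l = #(boundaryPairs n x l) := rfl

lemma mem_boundaryPairs {n : ℕ} {x : ℕ → ℝ} {l : ℝ} {q : ℕ × ℕ} :
    q ∈ boundaryPairs n x l ↔ 1 ≤ q.1 ∧ q.1 ≤ q.2 ∧ q.2 ≤ n ∧
      psign x q.1 q.2 = (-1) ^ (q.1 + q.2 + 1) ∧ psign x q.1 q.2 = l ∧ (q.1 = 1 ∨ q.2 = n) := by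
  simp only [boundaryPairs, Kv, mem_filter, mem_product, mem_Icc]
  constructor
  · rintro ⟨⟨⟨⟨h1, -⟩, -, h2⟩, h12, hcan⟩, hl, hbd⟩
    exact ⟨h1, h12, h2, hcan, hl, hbd⟩
  · rintro ⟨h1, h12, h2, hcan, hl, hbd⟩
    exact ⟨⟨⟨⟨h1, h12.trans h2⟩, h1.trans h12, h2⟩, h12, hcan⟩, hl, hbd⟩

lemma left_mem_boundaryPairs_iff {n j : ℕ} {x : ℕ → ℝ} (hn : Odd n)
    (hx : ∀ k ∈ Icc 1 n, x k ≠ 0) (htop : psign x 1 n = -1) (hj : 1 ≤ j) (hjn : j < n)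
    (l : ℝ) : (1, j) ∈ boundaryPairs n x l ↔ (j + 1, n) ∈ boundaryPairs n x (-l) := by
  have hx' : ∀ k ∈ Icc 1 j, x k ≠ 0 := fun k hk => hx k (Icc_subset_Icc_right hjn.le hk)
  have hleft : (-1 : ℝ) ^ (1 + j + 1) = (-1) ^ j := by
    rw [add_comm 1 j, add_assoc, pow_add, neg_one_sq, mul_one]
  have hright : (-1 : ℝ) ^ (j + 1 + n + 1) = -(-1) ^ j := by
    rw [add_assoc, pow_add, hn.add_one.neg_one_pow, pow_succ]
    ring
  simp only [mem_boundaryPairs, psign_add_one_left hx' (by omega) hjn.le, htop, hleft, hright,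
    neg_one_mul, neg_inj]
  grind

def boundaryPartner (n : ℕ) (q : ℕ × ℕ) : ℕ × ℕ :=
  if q.1 = 1 then (q.2 + 1, n) else (1, q.1 - 1)

lemma boundaryPartner_left (n j : ℕ) : boundaryPartner n (1, j) = (j + 1, n) := if_pos rfl

lemma boundaryPartner_right {n j : ℕ} (hj : 1 ≤ j) : boundaryPartner n (j + 1, n) = (1, j) := by
  simp only [boundaryPartner, if_neg (show j + 1 ≠ 1 by omega), Nat.add_sub_cancel]

lemma exists_split_of_mem_boundaryPairs {n : ℕ} {x : ℕ → ℝ} {l : ℝ} {q : ℕ × ℕ}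
    (hq : q ∈ boundaryPairs n x l) (hq1n : q ≠ (1, n)) :
    ∃ j, 1 ≤ j ∧ j < n ∧ (q = (1, j) ∨ q = (j + 1, n)) := by
  obtain ⟨⟨i, j⟩, rfl⟩ : ∃ p : ℕ × ℕ, q = p := ⟨q, rfl⟩
  rw [mem_boundaryPairs] at hq
  simp only [ne_eq, Prod.mk.injEq] at hq hq1n ⊢
  obtain ⟨hi, hij, hjn, -, -, rfl | rfl⟩ := hq
  · exact ⟨j, hij, by omega, Or.inl ⟨rfl, rfl⟩⟩
  · exact ⟨i - 1, by omega, by omega, Or.inr ⟨by omega, rfl⟩⟩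

lemma boundaryPartner_mem {n : ℕ} {x : ℕ → ℝ} (hn : Odd n) (hx : ∀ k ∈ Icc 1 n, x k ≠ 0)
    (htop : psign x 1 n = -1) {l : ℝ} {q : ℕ × ℕ} (hq : q ∈ boundaryPairs n x l)
    (hq1n : q ≠ (1, n)) :
    boundaryPartner n q ∈ (boundaryPairs n x (-l)).erase (1, n) ∧
      boundaryPartner n (boundaryPartner n q) = q := by
  obtain ⟨j, hj, hjn, rfl | rfl⟩ := exists_split_of_mem_boundaryPairs hq hq1n
  · rw [boundaryPartner_left, boundaryPartner_right hj, mem_erase]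
    refine ⟨⟨mt (congrArg Prod.fst) (by omega), ?_⟩, rfl⟩
    rwa [← left_mem_boundaryPairs_iff hn hx htop hj hjn]
  · rw [boundaryPartner_right hj, boundaryPartner_left, mem_erase]
    refine ⟨⟨mt (congrArg Prod.snd) hjn.ne, ?_⟩, rfl⟩
    rwa [left_mem_boundaryPairs_iff hn hx htop hj hjn, neg_neg]

open Classical in
theorem boundary_sign_count (n : ℕ) (x : ℕ → ℝ) (hn : Odd n)
    (hx : ∀ i ∈ Finset.Icc 1 n, x i ∈ Set.Icc (-1 : ℝ) 1 ∧ x i ≠ 0)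
    (hneg : Odd ((Finset.Icc 1 n).filter (fun i => Real.sign (x i) = -1)).card) :
    bcount n x 1 + 1 = bcount n x (-1) := by
  have hx0 : ∀ k ∈ Icc 1 n, x k ≠ 0 := fun k hk => (hx k hk).2
  have htop : psign x 1 n = -1 := by
    rw [psign_eq_neg_one_pow_card hx0]
    exact hneg.neg_one_pow
  have htop_mem : (1, n) ∈ boundaryPairs n x (-1) := by
    rw [mem_boundaryPairs, htop]
    refine ⟨le_rfl, hn.pos, le_rfl, ?_, rfl, Or.inl rfl⟩
    rw [add_comm 1 n, hn.add_one.add_one.neg_one_pow]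
  have htop_not_mem : (1, n) ∉ boundaryPairs n x 1 := fun h => by
    rw [mem_boundaryPairs, htop] at h
    norm_num at h
  have hfwd q (hq : q ∈ boundaryPairs n x 1) :=
    boundaryPartner_mem hn hx0 htop hq (ne_of_mem_of_not_mem hq htop_not_mem)
  have hbwd q (hq : q ∈ (boundaryPairs n x (-1)).erase (1, n)) :=
    boundaryPartner_mem hn hx0 htop (mem_of_mem_erase hq) (ne_of_mem_erase hq)
  rw [neg_neg] at hbwd
  have hcard : #(boundaryPairs n x 1) = #((boundaryPairs n x (-1)).erase (1, n)) :=
    card_bij' (fun q _ => boundaryPartner n q) (fun q _ => boundaryPartner n q)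
      (fun q hq => (hfwd q hq).1) (fun q hq => mem_of_mem_erase (hbwd q hq).1)
      (fun q hq => (hfwd q hq).2) (fun q hq => (hbwd q hq).2)
  rw [bcount_eq_card, bcount_eq_card, hcard, card_erase_add_one htop_mem]
end

section
/- Let n ≥ 2 and let y_1, …, y_n be nonzero real numbers with |y_i| < |y_{i+1}| for i = 1, …, n−1. Then ∏_{1 ≤ i < j ≤ n} (1 − y_i/y_j) ≤ 2^{⌊n/2⌋}. -/
/-!
Prove the bound for every finite set of indices on which `y` is nonzero and `|y|` is weakly
increasing, a condition that survives deleting entries and rescaling, by induction on the number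
of entries. If two entries are opposite, `y k' = -y k` with `k < k'`, their factor is `2`, while
the two factors they share with any third entry multiply to `1 - r²` or to `0`; so removing both
costs at most a factor `2`. If all entries have the same sign, every factor is at most `1`.

Otherwise multiply all positive entries by `c > 0`. Each factor becomes a constant or
`1 + X c^{±1}` with `X ≥ 0`, so the product is a nonnegative exponential sum in `log c`, hence
convex. Increase `c` until a positive entry catches up with a later negative one, and decrease it
until a later positive entry falls to the size of an earlier negative one: at both endpoints `|y|`
is still weakly increasing and there is an opposite pair, and by convexity the product at `c = 1`
is at most the larger endpoint value. If only one direction is available, the product is monotone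
in `c` towards it.
-/

open Finset Real

namespace Pohst

def expMonomials : Submonoid (ℝ → ℝ) where
  carrier := {f | ∃ c, 0 ≤ c ∧ ∃ a, f = fun u => c * exp (a * u)}
  one_mem' := ⟨1, zero_le_one, 0, by simp [Pi.one_def]⟩
  mul_mem' := by
    rintro _ _ ⟨c, hc, a, rfl⟩ ⟨d, hd, b, rfl⟩
    refine ⟨c * d, mul_nonneg hc hd, a + b, funext fun u => ?_⟩
    simp only [Pi.mul_apply, add_mul, exp_add]
    ring

def expSums : Subsemiring (ℝ → ℝ) := expMonomials.subsemiringClosure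

lemma mul_exp_mem_expSums {c : ℝ} (hc : 0 ≤ c) (a : ℝ) :
    (fun u => c * exp (a * u)) ∈ expSums :=
  expMonomials.subsemiringClosure_mem.2 <| AddSubmonoid.subset_closure ⟨c, hc, a, rfl⟩

lemma const_mem_expSums {c : ℝ} (hc : 0 ≤ c) : (fun _ => c) ∈ expSums := by
  simpa using mul_exp_mem_expSums hc 0

lemma convexOn_of_mem_expSums {f : ℝ → ℝ} (hf : f ∈ expSums) : ConvexOn ℝ Set.univ f := by
  replace hf := expMonomials.subsemiringClosure_mem.1 hf
  induction hf using AddSubmonoid.closure_induction with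
  | mem f hmem =>
    obtain ⟨c, hc, a, rfl⟩ := hmem
    exact (convexOn_exp.comp_linearMap (LinearMap.mulLeft ℝ a)).smul hc
  | zero => exact convexOn_const 0 convex_univ
  | add f g _ _ hfc hgc => exact hfc.add hgc

noncomputable def pairFactor (y : ℕ → ℝ) (i j : ℕ) : ℝ := if i < j then 1 - y i / y j else 1

noncomputable def pairProd (y : ℕ → ℝ) (S : Finset ℕ) : ℝ := ∏ i ∈ S, ∏ j ∈ S, pairFactor y i j

variable {y : ℕ → ℝ} {S T : Finset ℕ} {c : ℝ} {i j k k' : ℕ}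

lemma prod_filter_lt_eq_pairProd (y : ℕ → ℝ) (S : Finset ℕ) :
    ∏ q ∈ (S ×ˢ S).filter (fun q => q.1 < q.2), (1 - y q.1 / y q.2) = pairProd y S := by
  rw [prod_filter, prod_product]
  rfl

lemma pairProd_insert (hk : k ∉ S) :
    pairProd y (insert k S) = pairProd y S * ∏ i ∈ S, pairFactor y k i * pairFactor y i k := by
  simp only [pairProd, prod_insert hk, prod_mul_distrib, pairFactor, lt_irrefl, if_false]
  ring

lemma pairProd_const_mul (hc : c ≠ 0) :
    pairProd (fun i => c * y i) S = pairProd y S := by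
  simp only [pairProd, pairFactor, mul_div_mul_left _ _ hc]

lemma pairProd_neg : pairProd (-y) S = pairProd y S := by
  simp only [pairProd, pairFactor, Pi.neg_apply, neg_div_neg_eq]

noncomputable def scalePos (y : ℕ → ℝ) (c : ℝ) (i : ℕ) : ℝ := if 0 < y i then c * y i else y i

noncomputable def posNegPairs (y : ℕ → ℝ) (S : Finset ℕ) : Finset (ℕ × ℕ) :=
  (S ×ˢ S).filter fun q => q.1 < q.2 ∧ 0 < y q.1 ∧ y q.2 < 0

lemma mem_posNegPairs {q : ℕ × ℕ} :
    q ∈ posNegPairs y S ↔ q.1 ∈ S ∧ q.2 ∈ S ∧ q.1 < q.2 ∧ 0 < y q.1 ∧ y q.2 < 0 := by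
  simp [posNegPairs, and_assoc]

@[simp] lemma scalePos_one : scalePos y 1 = y := by
  funext i
  simp [scalePos]

lemma scalePos_of_pos (h : 0 < y i) : scalePos y c i = c * y i := if_pos h

lemma scalePos_of_nonpos (h : y i ≤ 0) : scalePos y c i = y i := if_neg h.not_gt

lemma scalePos_exp (u : ℝ) (i : ℕ) :
    scalePos y (exp u) i = exp ((if 0 < y i then 1 else 0) * u) * y i := by
  unfold scalePos
  split_ifs <;> simp

lemma scalePos_neg (hc : c ≠ 0) : scalePos (-y) c = fun i => -c * scalePos y c⁻¹ i := by
  funext i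
  rcases lt_trichotomy (y i) 0 with hi | hi | hi
  · simp [scalePos, hi, hi.not_gt]
  · simp [scalePos, hi]
  · simp [scalePos, hi, hi.not_gt, hc]

lemma scalePos_div_scalePos (hc : c ≠ 0) (h : 0 < y i / y j) :
    scalePos y c i / scalePos y c j = y i / y j := by
  rcases div_pos_iff.1 h with ⟨hi, hj⟩ | ⟨hi, hj⟩
  · rw [scalePos_of_pos hi, scalePos_of_pos hj, mul_div_mul_left _ _ hc]
  · rw [scalePos_of_nonpos hi.le, scalePos_of_nonpos hj.le]

lemma pairProd_scalePos_neg (hc : c ≠ 0) :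
    pairProd (scalePos (-y) c) S = pairProd (scalePos y c⁻¹) S := by
  rw [scalePos_neg hc, pairProd_const_mul (neg_ne_zero.2 hc)]

structure Admissible (y : ℕ → ℝ) (S : Finset ℕ) : Prop where
  ne_zero : ∀ i ∈ S, y i ≠ 0
  abs_monotoneOn : MonotoneOn (fun i => |y i|) S

lemma admissible_scalePos (h : Admissible y S) (hc : 0 < c)
    (hpn : ∀ q ∈ posNegPairs y S, c * y q.1 ≤ -y q.2)
    (hnp : ∀ q ∈ posNegPairs (-y) S, -y q.1 ≤ c * y q.2) :
    Admissible (scalePos y c) S := by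
  refine ⟨fun i hi => ?_, fun i hi j hj hij => ?_⟩
  · unfold scalePos
    split_ifs
    exacts [mul_ne_zero hc.ne' (h.ne_zero i hi), h.ne_zero i hi]
  have hyi := h.ne_zero i hi
  have hyj := h.ne_zero j hj
  rcases hyi.lt_or_gt with hi₀ | hi₀ <;> rcases hyj.lt_or_gt with hj₀ | hj₀
  · simpa [scalePos_of_nonpos hi₀.le, scalePos_of_nonpos hj₀.le] using h.abs_monotoneOn hi hj hij
  · simpa only [scalePos_of_nonpos hi₀.le, scalePos_of_pos hj₀, abs_of_neg hi₀,
      abs_of_pos (mul_pos hc hj₀)] using hnp (i, j) (mem_posNegPairs.2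
        ⟨hi, hj, hij.lt_of_ne (by rintro rfl; linarith), by simpa using hi₀, by simpa using hj₀⟩)
  · simpa only [scalePos_of_pos hi₀, scalePos_of_nonpos hj₀.le, abs_of_pos (mul_pos hc hi₀),
      abs_of_neg hj₀] using hpn (i, j) (mem_posNegPairs.2
        ⟨hi, hj, hij.lt_of_ne (by rintro rfl; linarith), hi₀, hj₀⟩)
  · simp only [scalePos_of_pos hi₀, scalePos_of_pos hj₀, abs_mul]
    exact mul_le_mul_of_nonneg_left (h.abs_monotoneOn hi hj hij) (abs_nonneg c)

namespace Admissible

lemma mono (h : Admissible y S) (hTS : T ⊆ S) : Admissible y T :=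
  ⟨fun i hi => h.ne_zero i (hTS hi), h.abs_monotoneOn.mono (coe_subset.2 hTS)⟩

lemma neg (h : Admissible y S) : Admissible (-y) S :=
  ⟨by simpa using h.ne_zero, by simpa using h.abs_monotoneOn⟩

lemma div_le_one (h : Admissible y S) (hi : i ∈ S) (hj : j ∈ S) (hij : i ≤ j) :
    y i / y j ≤ 1 := by
  refine (le_abs_self _).trans ?_
  rw [abs_div]
  exact div_le_one_of_le₀ (h.abs_monotoneOn hi hj hij) (abs_nonneg _)

lemma pairFactor_nonneg (h : Admissible y S) (hi : i ∈ S) (hj : j ∈ S) :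
    0 ≤ pairFactor y i j := by
  unfold pairFactor
  split_ifs with hij
  · linarith [h.div_le_one hi hj hij.le]
  · exact zero_le_one

lemma pairProd_nonneg (h : Admissible y S) : 0 ≤ pairProd y S :=
  prod_nonneg fun _ hi => prod_nonneg fun _ hj => h.pairFactor_nonneg hi hj

lemma pairFactor_mul_le_one (h : Admissible y S) (hk : k ∈ S) (hk' : k' ∈ S) (hlt : k < k')
    (hopp : y k' = -y k) (hi : i ∈ S) (hik : i ≠ k) (hik' : i ≠ k') :
    pairFactor y k i * pairFactor y i k * (pairFactor y k' i * pairFactor y i k') ≤ 1 := by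
  rcases hik.lt_or_gt with hik | hki
  · have hik' : i < k' := hik.trans hlt
    simp only [pairFactor, hik, hik', hik.not_gt, hik'.not_gt, if_true, if_false, hopp, div_neg]
    nlinarith [sq_nonneg (y i / y k)]
  rcases hik'.lt_or_gt with hik' | hk'i
  · -- `|y i| = |y k|`, so `y i = ± y k` and one of the two factors vanishes
    have habs : |y i| = |y k| := le_antisymm
      (by simpa [hopp] using h.abs_monotoneOn hi hk' hik'.le) (h.abs_monotoneOn hk hi hki.le)
    have hyk := h.ne_zero k hk
    simp only [pairFactor, hki, hik', hki.not_gt, hik'.not_gt, if_true, if_false, hopp, one_mul,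
      mul_one]
    rcases abs_eq_abs.1 habs with he | he <;> simp [he, hyk]
  · have hki' : k < i := hlt.trans hk'i
    simp only [pairFactor, hki', hk'i, hki'.not_gt, hk'i.not_gt, if_true, if_false, hopp, neg_div]
    nlinarith [sq_nonneg (y k / y i)]

lemma pairProd_insert_insert_le (h : Admissible y (insert k (insert k' T))) (hkT : k ∉ T)
    (hk'T : k' ∉ T) (hlt : k < k') (hopp : y k' = -y k) :
    pairProd y (insert k (insert k' T)) ≤ 2 * pairProd y T := by
  have hkT' : k ∉ insert k' T := by simp [hkT, hlt.ne]
  have htwo : pairFactor y k k' * pairFactor y k' k = 2 := by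
    simp [pairFactor, hlt, hlt.not_gt, hopp, div_neg, div_self (h.ne_zero k (by simp))]
    norm_num
  have hT : ∏ i ∈ T, pairFactor y k i * pairFactor y i k * (pairFactor y k' i * pairFactor y i k')
      ≤ 1 := by
    refine prod_le_one (fun i hi => ?_) fun i hi => ?_
    · have hi : i ∈ insert k (insert k' T) := by simp [hi]
      have hk : k ∈ insert k (insert k' T) := by simp
      have hk' : k' ∈ insert k (insert k' T) := by simp
      exact mul_nonneg (mul_nonneg (h.pairFactor_nonneg hk hi) (h.pairFactor_nonneg hi hk))
        (mul_nonneg (h.pairFactor_nonneg hk' hi) (h.pairFactor_nonneg hi hk'))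
    · exact h.pairFactor_mul_le_one (by simp) (by simp) hlt hopp (by simp [hi])
        (by rintro rfl; exact hkT hi) (by rintro rfl; exact hk'T hi)
  rw [pairProd_insert hkT', pairProd_insert hk'T, prod_insert hk'T, htwo]
  calc _ = 2 * pairProd y T * ∏ i ∈ T,
        pairFactor y k i * pairFactor y i k * (pairFactor y k' i * pairFactor y i k') := by
        simp only [prod_mul_distrib]; ring
    _ ≤ 2 * pairProd y T * 1 := by
        gcongr
        exact mul_nonneg zero_le_two
          (h.mono ((subset_insert _ _).trans (subset_insert _ _))).pairProd_nonneg
    _ = 2 * pairProd y T := mul_one _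

lemma div_pos_or_mem_posNegPairs (h : Admissible y S) (hi : i ∈ S) (hj : j ∈ S) (hij : i < j) :
    0 < y i / y j ∨ (i, j) ∈ posNegPairs y S ∨ (i, j) ∈ posNegPairs (-y) S := by
  rcases (h.ne_zero i hi).lt_or_gt with hi₀ | hi₀ <;>
    rcases (h.ne_zero j hj).lt_or_gt with hj₀ | hj₀
  · exact .inl (div_pos_of_neg_of_neg hi₀ hj₀)
  · exact .inr (.inr (mem_posNegPairs.2 ⟨hi, hj, hij, by simpa using hi₀, by simpa using hj₀⟩))
  · exact .inr (.inl (mem_posNegPairs.2 ⟨hi, hj, hij, hi₀, hj₀⟩))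
  · exact .inl (div_pos hi₀ hj₀)

lemma exists_scalePos_opposite (h : Admissible y S) (hne : (posNegPairs y S).Nonempty) :
    ∃ c, 1 ≤ c ∧ Admissible (scalePos y c) S ∧
      ∃ k ∈ S, ∃ k' ∈ S, k < k' ∧ scalePos y c k' = -scalePos y c k := by
  -- the smallest scaling factor at which some positive entry catches up with a later negative one
  set c := (posNegPairs y S).inf' hne fun q => -y q.2 / y q.1
  have hc_le : ∀ q ∈ posNegPairs y S, c * y q.1 ≤ -y q.2 := fun q hq =>
    (le_div_iff₀ (mem_posNegPairs.1 hq).2.2.2.1).1 (inf'_le _ hq)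
  have hc : 1 ≤ c := by
    refine le_inf' _ _ fun q hq => ?_
    obtain ⟨h₁, h₂, h₁₂, hpos, hneg⟩ := mem_posNegPairs.1 hq
    have := h.abs_monotoneOn h₁ h₂ h₁₂.le
    rw [one_le_div hpos]
    simpa [abs_of_pos hpos, abs_of_neg hneg] using this
  have hnp : ∀ q ∈ posNegPairs (-y) S, -y q.1 ≤ c * y q.2 := fun q hq => by
    obtain ⟨h₁, h₂, h₁₂, hneg, hpos⟩ := mem_posNegPairs.1 hq
    simp only [Pi.neg_apply, neg_pos, neg_lt_zero] at hneg hpos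
    have := h.abs_monotoneOn h₁ h₂ h₁₂.le
    simp only [abs_of_neg hneg, abs_of_pos hpos] at this
    nlinarith
  obtain ⟨q, hq, hqc⟩ : ∃ q ∈ posNegPairs y S, c = -y q.2 / y q.1 :=
    exists_mem_eq_inf' hne _
  obtain ⟨h₁, h₂, h₁₂, hpos, hneg⟩ := mem_posNegPairs.1 hq
  refine ⟨c, hc, admissible_scalePos h (zero_lt_one.trans_le hc) hc_le hnp,
    q.1, h₁, q.2, h₂, h₁₂, ?_⟩
  rw [scalePos_of_pos hpos, scalePos_of_nonpos hneg.le, hqc, div_mul_cancel₀ _ hpos.ne', neg_neg]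

lemma pairProd_le_pairProd_scalePos (h : Admissible y S) (hc : 1 ≤ c)
    (hnp : posNegPairs (-y) S = ∅) : pairProd y S ≤ pairProd (scalePos y c) S := by
  refine prod_le_prod (fun i hi => prod_nonneg fun j hj => h.pairFactor_nonneg hi hj)
    fun i hi => prod_le_prod (fun j hj => h.pairFactor_nonneg hi hj) fun j hj => ?_
  unfold pairFactor
  split_ifs with hij
  swap
  · exact le_rfl
  rcases h.div_pos_or_mem_posNegPairs hi hj hij with hsign | hpn | hnp'
  · rw [scalePos_div_scalePos (by positivity) hsign]
  · obtain ⟨-, -, -, hi₀, hj₀⟩ := mem_posNegPairs.1 hpn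
    rw [scalePos_of_pos hi₀, scalePos_of_nonpos hj₀.le, mul_div_assoc]
    nlinarith [div_neg_of_pos_of_neg hi₀ hj₀]
  · simp [hnp] at hnp'

lemma pairFactor_scalePos_exp_mem_expSums (h : Admissible y S) (hi : i ∈ S) (hj : j ∈ S) :
    (fun u => pairFactor (scalePos y (exp u)) i j) ∈ expSums := by
  by_cases hij : i < j
  swap
  · simpa [pairFactor, hij] using const_mem_expSums zero_le_one
  by_cases hsign : 0 < y i / y j
  · simpa [pairFactor, hij, scalePos_div_scalePos (exp_ne_zero _) hsign] using
      const_mem_expSums (sub_nonneg.2 (h.div_le_one hi hj hij.le))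
  · set ε : ℕ → ℝ := fun i => if 0 < y i then 1 else 0
    have hratio : ∀ u, scalePos y (exp u) i / scalePos y (exp u) j =
        exp ((ε i - ε j) * u) * (y i / y j) := fun u => by
      rw [scalePos_exp, scalePos_exp, mul_div_mul_comm, ← exp_sub, sub_mul]
    simp only [pairFactor, hij, if_true, hratio]
    have := add_mem (one_mem expSums) (mul_exp_mem_expSums (neg_nonneg.2 (not_lt.1 hsign))
      (ε i - ε j))
    convert this using 1
    funext u
    simp only [Pi.add_apply, Pi.one_apply]
    ring

lemma pairProd_le_max (h : Admissible y S) {a b : ℝ} (ha : 0 < a) (ha₁ : a ≤ 1) (hb : 1 ≤ b) :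
    pairProd y S ≤ max (pairProd (scalePos y a) S) (pairProd (scalePos y b) S) := by
  set F : ℝ → ℝ := fun u => pairProd (scalePos y (exp u)) S
  have hF : F ∈ expSums := by
    have : F = ∏ i ∈ S, ∏ j ∈ S, fun u => pairFactor (scalePos y (exp u)) i j := by
      funext u
      simp [F, pairProd, prod_apply]
    rw [this]
    exact prod_mem fun i hi => prod_mem fun j hj => h.pairFactor_scalePos_exp_mem_expSums hi hj
  have h0 : (0 : ℝ) ∈ segment ℝ (log a) (log b) := by
    have ha' := log_nonpos ha.le ha₁
    have hb' := log_nonneg hb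
    rw [segment_eq_Icc (ha'.trans hb')]
    exact ⟨ha', hb'⟩
  simpa [F, exp_log ha, exp_log (zero_lt_one.trans_le hb)] using
    (convexOn_of_mem_expSums hF).le_on_segment (Set.mem_univ _) (Set.mem_univ _) h0

lemma pairProd_le_of_opposite
    (ih : ∀ T ⊂ S, ∀ y : ℕ → ℝ, Admissible y T → pairProd y T ≤ 2 ^ (#T / 2))
    (h : Admissible y S) (hopp : ∃ k ∈ S, ∃ k' ∈ S, k < k' ∧ y k' = -y k) :
    pairProd y S ≤ 2 ^ (#S / 2) := by
  obtain ⟨k, hk, k', hk', hlt, hyk⟩ := hopp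
  set T := (S.erase k).erase k'
  have hk'S : k' ∈ S.erase k := mem_erase.2 ⟨hlt.ne', hk'⟩
  have hS : insert k (insert k' T) = S := by rw [insert_erase hk'S, insert_erase hk]
  have hcard : #T + 2 = #S := by
    have hT : #T = #(S.erase k) - 1 := card_erase_of_mem hk'S
    have := card_pos.2 ⟨k', hk'S⟩
    rw [card_erase_of_mem hk] at hT this
    omega
  have hTS : T ⊂ S := (erase_ssubset hk'S).trans_le (erase_subset k S)
  rw [← hS] at h ⊢
  calc pairProd y (insert k (insert k' T))
      ≤ 2 * pairProd y T :=
        h.pairProd_insert_insert_le (by simp [T]) (by simp [T]) hlt hyk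
    _ ≤ 2 * 2 ^ (#T / 2) := by
        gcongr
        exact ih T hTS y (h.mono ((subset_insert _ _).trans (subset_insert _ _)))
    _ = 2 ^ (#(insert k (insert k' T)) / 2) := by
        rw [hS, ← hcard, ← pow_succ']
        congr 1
        omega

lemma pairProd_le_one (h : Admissible y S) (hpn : posNegPairs y S = ∅)
    (hnp : posNegPairs (-y) S = ∅) : pairProd y S ≤ 1 := by
  refine prod_le_one (fun i hi => prod_nonneg fun j hj => h.pairFactor_nonneg hi hj)
    fun i hi => prod_le_one (fun j hj => h.pairFactor_nonneg hi hj) fun j hj => ?_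
  unfold pairFactor
  split_ifs with hij
  swap
  · exact le_rfl
  rcases h.div_pos_or_mem_posNegPairs hi hj hij with hsign | hpn' | hnp'
  · linarith
  · simp [hpn] at hpn'
  · simp [hnp] at hnp'

lemma pairProd_le_of_posNegPairs_nonempty
    (ih : ∀ T ⊂ S, ∀ y : ℕ → ℝ, Admissible y T → pairProd y T ≤ 2 ^ (#T / 2))
    (h : Admissible y S) (hpn : (posNegPairs y S).Nonempty) :
    pairProd y S ≤ 2 ^ (#S / 2) := by
  obtain ⟨c, hc, hadm, hopp⟩ := h.exists_scalePos_opposite hpn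
  have hup := pairProd_le_of_opposite ih hadm hopp
  rcases (posNegPairs (-y) S).eq_empty_or_nonempty with hnp | hnp
  · exact (h.pairProd_le_pairProd_scalePos hc hnp).trans hup
  -- scaling the negative entries of `y` up is scaling its positive entries down
  obtain ⟨d, hd, hadm', hopp'⟩ := h.neg.exists_scalePos_opposite hnp
  have hdown := pairProd_le_of_opposite ih hadm' hopp'
  rw [pairProd_scalePos_neg (by positivity)] at hdown
  exact (h.pairProd_le_max (by positivity) (inv_le_one_of_one_le₀ hd) hc).trans (max_le hdown hup)

theorem pairProd_le (h : Admissible y S) : pairProd y S ≤ 2 ^ (#S / 2) := by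
  induction S using Finset.strongInduction generalizing y with
  | H S ih =>
  rcases (posNegPairs y S).eq_empty_or_nonempty with hpn | hpn
  · rcases (posNegPairs (-y) S).eq_empty_or_nonempty with hnp | hnp
    · exact (h.pairProd_le_one hpn hnp).trans (one_le_pow₀ one_le_two)
    · simpa [pairProd_neg] using pairProd_le_of_posNegPairs_nonempty ih h.neg hnp
  · exact pairProd_le_of_posNegPairs_nonempty ih h hpn

end Admissible
end Pohst

theorem pohst_bound_general (n : ℕ) (y : ℕ → ℝ)
    (hy : ∀ i ∈ Finset.Icc 1 n, y i ≠ 0)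
    (hmono : ∀ i, 1 ≤ i → i ≤ n - 1 → |y i| < |y (i + 1)|) :
    ∏ q ∈ (Finset.Icc 1 n ×ˢ Finset.Icc 1 n).filter (fun q => q.1 < q.2),
        (1 - y q.1 / y q.2) ≤ 2 ^ (n / 2) := by
  have hadm : Pohst.Admissible y (Icc 1 n) := by
    refine ⟨hy, ?_⟩
    rw [coe_Icc]
    exact monotoneOn_of_le_add_one Set.ordConnected_Icc fun i _ hi hi₁ =>
      (hmono i hi.1 (by simp at hi₁; omega)).le
  simpa [Pohst.prod_filter_lt_eq_pairProd] using hadm.pairProd_le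

theorem pohst_bound (n : ℕ) (hn : 2 ≤ n) (y : ℕ → ℝ)
    (hy : ∀ i ∈ Finset.Icc 1 n, y i ≠ 0)
    (hmono : ∀ i, 1 ≤ i → i ≤ n - 1 → |y i| < |y (i + 1)|) :
    ∏ q ∈ (Finset.Icc 1 n ×ˢ Finset.Icc 1 n).filter (fun q => q.1 < q.2),
        (1 - y q.1 / y q.2) ≤ 2 ^ (n / 2) :=
  pohst_bound_general n y hy hmono
end

section
/- Let n ≥ 3 be odd. Suppose that for all nonzero real numbers y_1, …, y_n with |y_i| < |y_{i+1}| for i = 1, …, n−1 one has ∏_{1 ≤ i < j ≤ n} (1 − y_i/y_j) ≤ 2^{⌊n/2⌋}. Then for all nonzero real numbers y_1, …, y_{n+1} with |y_i| < |y_{i+1}| for i = 1, …, n one has ∏_{1 ≤ i < j ≤ n+1} (1 − y_i/y_j) ≤ 2^{⌊(n+1)/2⌋}. -/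
open Finset

theorem odd_implies_succ (n : ℕ) (hn : 3 ≤ n) (hodd : Odd n)
    (H : ∀ y : ℕ → ℝ, (∀ i ∈ Finset.Icc 1 n, y i ≠ 0) →
      (∀ i, 1 ≤ i → i ≤ n - 1 → |y i| < |y (i + 1)|) →
      ∏ q ∈ (Finset.Icc 1 n ×ˢ Finset.Icc 1 n).filter (fun q => q.1 < q.2),
          (1 - y q.1 / y q.2) ≤ 2 ^ (n / 2)) :
    ∀ y : ℕ → ℝ, (∀ i ∈ Finset.Icc 1 (n + 1), y i ≠ 0) →
      (∀ i, 1 ≤ i → i ≤ n → |y i| < |y (i + 1)|) →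
      ∏ q ∈ (Finset.Icc 1 (n + 1) ×ˢ Finset.Icc 1 (n + 1)).filter
          (fun q => q.1 < q.2), (1 - y q.1 / y q.2) ≤ 2 ^ ((n + 1) / 2) := by
  intro y hy0 hinc
  set f : ℕ × ℕ → ℝ := fun q => 1 - y q.1 / y q.2 with hfdef
  set T : Finset (ℕ × ℕ) :=
    (Finset.Icc 1 (n + 1) ×ˢ Finset.Icc 1 (n + 1)).filter (fun q => q.1 < q.2) with hT
  -- strict monotonicity of |y| on [1, n+1]
  have hkey : ∀ d a : ℕ, 1 ≤ a → a + d + 1 ≤ n + 1 → |y a| < |y (a + d + 1)| := by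
    intro d
    induction d with
    | zero => intro a ha hb; simpa using hinc a ha (by omega)
    | succ d ih =>
      intro a ha hb
      have h1 := ih a ha (by omega)
      have h2 := hinc (a + d + 1) (by omega) (by omega)
      have he : a + (d + 1) + 1 = a + d + 1 + 1 := by omega
      rw [he]
      exact h1.trans h2
  have habs : ∀ a b : ℕ, 1 ≤ a → a < b → b ≤ n + 1 → |y a| < |y b| := by
    intro a b ha hab hb
    have he : b = a + (b - a - 1) + 1 := by omega
    rw [he]
    exact hkey (b - a - 1) a ha (by omega)
  have hmemT : ∀ q ∈ T, 1 ≤ q.1 ∧ q.1 < q.2 ∧ q.2 ≤ n + 1 := by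
    intro q hq
    simp only [hT, mem_filter, mem_product, mem_Icc] at hq
    exact ⟨hq.1.1.1, hq.2, hq.1.2.2⟩
  have hfpos : ∀ q ∈ T, 0 < f q := by
    intro q hq
    obtain ⟨h1, h2, h3⟩ := hmemT q hq
    have ha := habs q.1 q.2 h1 h2 h3
    have hb : (0:ℝ) < |y q.2| := abs_pos.2 (hy0 q.2 (by rw [mem_Icc]; omega))
    have hr : |y q.1 / y q.2| < 1 := by
      rw [abs_div]; exact (div_lt_one hb).2 ha
    have hlt := (abs_lt.1 hr).2
    simp only [hfdef]
    linarith
  have hPpos : 0 < ∏ q ∈ T, f q := Finset.prod_pos hfpos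
  -- per-k bound on the product over pairs not involving k
  have hQ : ∀ k ∈ Finset.Icc 1 (n + 1),
      ∏ q ∈ T.filter (fun q => ¬(q.1 = k ∨ q.2 = k)), f q ≤ 2 ^ (n / 2) := by
    intro k hk
    rw [mem_Icc] at hk
    set σ : ℕ → ℕ := fun i => if i < k then i else i + 1 with hσ
    set τ : ℕ → ℕ := fun a => if a < k then a else a - 1 with hτ
    have hσlt : ∀ a b : ℕ, a < b → σ a < σ b := by
      intro a b h; simp only [hσ]; split_ifs <;> omega
    have hσmem : ∀ i, 1 ≤ i → i ≤ n → 1 ≤ σ i ∧ σ i ≤ n + 1 ∧ σ i ≠ k := by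
      intro i h1 h2; simp only [hσ]; split_ifs <;> omega
    have hτmem : ∀ a, 1 ≤ a → a ≤ n + 1 → a ≠ k → 1 ≤ τ a ∧ τ a ≤ n := by
      intro a h1 h2 h3; simp only [hτ]; split_ifs <;> omega
    have hτlt : ∀ a b, a ≠ k → b ≠ k → a < b → τ a < τ b := by
      intro a b h1 h2 h3; simp only [hτ]; split_ifs <;> omega
    have hστ : ∀ a, 1 ≤ a → a ≠ k → σ (τ a) = a := by
      intro a h1 h2; simp only [hσ, hτ]; split_ifs <;> omega
    have hτσ : ∀ i, τ (σ i) = i := by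
      intro i; simp only [hσ, hτ]; split_ifs <;> omega
    have key := H (fun i => y (σ i)) ?_ ?_
    · refine le_trans (le_of_eq ?_) key
      refine Finset.prod_nbij' (fun q => (τ q.1, τ q.2)) (fun q => (σ q.1, σ q.2))
        ?_ ?_ ?_ ?_ ?_
      · intro q hq
        simp only [hT, mem_filter, mem_product, mem_Icc] at hq ⊢
        obtain ⟨⟨⟨a1, a2⟩, b1, b2⟩, hlt⟩ := hq.1
        have hne := hq.2
        push_neg at hne
        obtain ⟨t1, t2⟩ := hτmem q.1 a1 a2 hne.1
        obtain ⟨t3, t4⟩ := hτmem q.2 b1 b2 hne.2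
        exact ⟨⟨⟨t1, t2⟩, t3, t4⟩, hτlt q.1 q.2 hne.1 hne.2 hlt⟩
      · intro q hq
        simp only [hT, mem_filter, mem_product, mem_Icc] at hq ⊢
        obtain ⟨⟨⟨a1, a2⟩, b1, b2⟩, hlt⟩ := hq
        obtain ⟨s1, s2, s3⟩ := hσmem q.1 a1 a2
        obtain ⟨s4, s5, s6⟩ := hσmem q.2 b1 b2
        refine ⟨⟨⟨⟨s1, s2⟩, s4, s5⟩, hσlt q.1 q.2 hlt⟩, ?_⟩
        push_neg
        exact ⟨s3, s6⟩
      · intro q hq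
        simp only [hT, mem_filter, mem_product, mem_Icc] at hq
        obtain ⟨⟨⟨a1, a2⟩, b1, b2⟩, hlt⟩ := hq.1
        have hne := hq.2
        push_neg at hne
        have e1 := hστ q.1 a1 hne.1
        have e2 := hστ q.2 b1 hne.2
        simp [e1, e2]
      · intro q hq
        simp [hτσ]
      · intro q hq
        simp only [hT, mem_filter, mem_product, mem_Icc] at hq
        have hne := hq.2
        push_neg at hne
        obtain ⟨⟨⟨a1, a2⟩, b1, b2⟩, hlt⟩ := hq.1
        simp only [hfdef, hστ q.1 a1 hne.1, hστ q.2 b1 hne.2]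
    · intro i hi
      rw [mem_Icc] at hi
      obtain ⟨p1, p2, p3⟩ := hσmem i hi.1 hi.2
      exact hy0 (σ i) (by rw [mem_Icc]; omega)
    · intro i h1 h2
      obtain ⟨p1, p2, p3⟩ := hσmem i h1 (by omega)
      obtain ⟨q1, q2, q3⟩ := hσmem (i + 1) (by omega) (by omega)
      exact habs (σ i) (σ (i + 1)) p1 (hσlt i (i + 1) (by omega)) q2
  -- double counting: each pair belongs to exactly two "involving k" sets
  have hdouble : ∏ k ∈ Finset.Icc 1 (n + 1),
      ∏ q ∈ T.filter (fun q => q.1 = k ∨ q.2 = k), f q = (∏ q ∈ T, f q) ^ 2 := by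
    have h1 : ∀ k ∈ Finset.Icc 1 (n + 1),
        ∏ q ∈ T.filter (fun q => q.1 = k ∨ q.2 = k), f q
          = ∏ q ∈ T, (if q.1 = k ∨ q.2 = k then f q else 1) := by
      intro k _; exact Finset.prod_filter _ _
    rw [Finset.prod_congr rfl h1, Finset.prod_comm]
    have h2 : ∀ q ∈ T, ∏ k ∈ Finset.Icc 1 (n + 1),
        (if q.1 = k ∨ q.2 = k then f q else 1) = f q ^ 2 := by
      intro q hq
      obtain ⟨m1, m2, m3⟩ := hmemT q hq
      rw [← Finset.prod_filter]
      have hset : (Finset.Icc 1 (n + 1)).filter (fun k => q.1 = k ∨ q.2 = k)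
          = {q.1, q.2} := by
        ext x
        simp only [mem_filter, mem_Icc, mem_insert, mem_singleton]
        constructor
        · rintro ⟨_, h | h⟩
          · left; omega
          · right; omega
        · rintro (h | h) <;> subst h <;> exact ⟨by omega, by omega⟩
      rw [hset]
      rw [Finset.prod_insert (by simp; omega), Finset.prod_singleton, sq]
    rw [Finset.prod_congr rfl h2, Finset.prod_pow]
  -- combine
  set P := ∏ q ∈ T, f q with hP
  have hsplit : ∀ k, (∏ q ∈ T.filter (fun q => q.1 = k ∨ q.2 = k), f q) *
      (∏ q ∈ T.filter (fun q => ¬(q.1 = k ∨ q.2 = k)), f q) = P :=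
    fun k => Finset.prod_filter_mul_prod_filter_not T _ f
  have hFpos : ∀ k, 0 < ∏ q ∈ T.filter (fun q => q.1 = k ∨ q.2 = k), f q :=
    fun k => Finset.prod_pos (fun q hq => hfpos q (Finset.mem_of_mem_filter q hq))
  have hcard : (Finset.Icc 1 (n + 1)).card = n + 1 := by simp
  have step : P ^ (n + 1) ≤ P ^ 2 * ((2:ℝ) ^ (n / 2)) ^ (n + 1) := by
    calc P ^ (n + 1) = ∏ _k ∈ Finset.Icc 1 (n + 1), P := by rw [Finset.prod_const, hcard]
      _ = ∏ k ∈ Finset.Icc 1 (n + 1),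
            ((∏ q ∈ T.filter (fun q => q.1 = k ∨ q.2 = k), f q) *
             (∏ q ∈ T.filter (fun q => ¬(q.1 = k ∨ q.2 = k)), f q)) :=
          Finset.prod_congr rfl (fun k _ => (hsplit k).symm)
      _ ≤ ∏ k ∈ Finset.Icc 1 (n + 1),
            ((∏ q ∈ T.filter (fun q => q.1 = k ∨ q.2 = k), f q) * (2:ℝ) ^ (n / 2)) := by
          refine Finset.prod_le_prod (fun k _ => ?_) (fun k hk => ?_)
          · exact mul_nonneg (hFpos k).le (Finset.prod_nonneg
              (fun q hq => (hfpos q (Finset.mem_of_mem_filter q hq)).le))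
          · exact mul_le_mul_of_nonneg_left (hQ k hk) (hFpos k).le
      _ = (∏ k ∈ Finset.Icc 1 (n + 1),
            ∏ q ∈ T.filter (fun q => q.1 = k ∨ q.2 = k), f q) *
            ∏ _k ∈ Finset.Icc 1 (n + 1), (2:ℝ) ^ (n / 2) := Finset.prod_mul_distrib
      _ = P ^ 2 * ((2:ℝ) ^ (n / 2)) ^ (n + 1) := by
          rw [hdouble, Finset.prod_const, hcard]
  have hstep2 : P ^ (n - 1) ≤ ((2:ℝ) ^ (n / 2)) ^ (n + 1) := by
    have hpow : P ^ (n + 1) = P ^ (n - 1) * P ^ 2 := by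
      rw [← pow_add]; congr 1; omega
    rw [hpow, mul_comm (P ^ 2) _] at step
    exact le_of_mul_le_mul_right step (pow_pos hPpos 2)
  obtain ⟨t, rfl⟩ := hodd
  have e1 : (2 * t + 1) / 2 = t := by omega
  have e2 : (2 * t + 1 + 1) / 2 = t + 1 := by omega
  have e3 : 2 * t + 1 - 1 = 2 * t := by omega
  rw [e1, e3] at hstep2
  rw [e2]
  refine le_of_pow_le_pow_left₀ (n := 2 * t) (by omega) (by positivity) ?_
  calc P ^ (2 * t) ≤ ((2:ℝ) ^ t) ^ (2 * t + 1 + 1) := hstep2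
    _ = ((2:ℝ) ^ (t + 1)) ^ (2 * t) := by rw [← pow_mul, ← pow_mul]; ring_nf
end
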